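/- arXiv:1903.08442 — 2 statements merged into one kernel-verified Lean document; each statement's English description precedes it below -/
import Mathlib

section
/- Let X be a set and {U_n}_{n≥0} a sequence of covers of X such that U_{n+1} star-refines U_n for every n. Define ρ(x, y) = 2^{-n(x,y)} where n(x, y) is the supremum of integers k such that both x and y lie in a common element of U_k (with ρ(x,y) = 0 if this supremum is infinite), and define d(x, y) = inf Σ_{i=1}^{n-1} ρ(x_i, x_{i+1}) over all finite chains x = x_1, x_2, …, x_n = y. Then d is a pseudometric on X satisfying ρ(x, y)/2 ≤ d(x, y) ≤ ρ(x, y) for all x, y ∈ X. -/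
open scoped ENNReal

/-- The set of indices `k` such that `x` and `y` lie in a common member of `U k`. -/
def commonIdx {X : Type*} (U : ℕ → Set (Set X)) (x y : X) : Set ℕ :=
  {k : ℕ | ∃ u ∈ U k, x ∈ u ∧ y ∈ u}

/-- `ρ(x, y) = 2 ^ (-n(x,y))` where `n(x,y)` is the supremum of the integers `k`
such that `x` and `y` lie in a common member of `U k`, with `ρ(x,y) = 0` if
this supremum is infinite. -/
noncomputable def frinkRho {X : Type*} (U : ℕ → Set (Set X)) (x y : X) : ℝ :=
  if sSup ((fun k : ℕ => (k : ℕ∞)) '' commonIdx U x y) = ⊤ then 0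
  else (2 : ℝ) ^ (-((sSup ((fun k : ℕ => (k : ℕ∞)) '' commonIdx U x y)).toNat : ℤ))

/-- `d(x, y)` is the infimum of `∑ ρ(xᵢ, xᵢ₊₁)` over all finite chains from `x` to `y`. -/
noncomputable def frinkD {X : Type*} (U : ℕ → Set (Set X)) (x y : X) : ℝ :=
  sInf {s : ℝ | ∃ (n : ℕ) (c : ℕ → X), c 0 = x ∧ c n = y ∧
    s = ∑ i ∈ Finset.range n, frinkRho U (c i) (c (i + 1))}

section Aux
variable {X : Type*} (U : ℕ → Set (Set X))

lemma rho_nonneg (x y : X) : 0 ≤ frinkRho U x y := by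
  unfold frinkRho
  split
  · exact le_refl _
  · positivity

lemma rho_le_one (x y : X) : frinkRho U x y ≤ 1 := by
  unfold frinkRho
  split
  · norm_num
  · calc (2:ℝ) ^ (-((sSup ((fun k : ℕ => (k : ℕ∞)) '' commonIdx U x y)).toNat : ℤ))
        ≤ (2:ℝ) ^ (0:ℤ) := by
          apply zpow_le_zpow_right₀ one_le_two
          simp
    _ = 1 := by norm_num

lemma rho_symm (x y : X) : frinkRho U x y = frinkRho U y x := by
  have : commonIdx U x y = commonIdx U y x := by
    ext k; constructor <;> rintro ⟨u, hu, h1, h2⟩ <;> exact ⟨u, hu, h2, h1⟩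
  unfold frinkRho
  rw [this]

lemma rho_cases (x y : X) :
    frinkRho U x y = 0 ∨ ∃ N : ℕ, frinkRho U x y = (2:ℝ) ^ (-(N:ℤ)) := by
  unfold frinkRho
  split
  · exact Or.inl rfl
  · exact Or.inr ⟨_, rfl⟩

lemma rho_le_of_mem {x y : X} {m : ℕ} (hm : m ∈ commonIdx U x y) :
    frinkRho U x y ≤ (2:ℝ) ^ (-(m:ℤ)) := by
  unfold frinkRho
  split
  · positivity
  · rename_i hT
    apply zpow_le_zpow_right₀ one_le_two
    have h1 : (m : ℕ∞) ≤ sSup ((fun k : ℕ => (k : ℕ∞)) '' commonIdx U x y) :=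
      le_sSup ⟨m, hm, rfl⟩
    rw [← ENat.coe_toNat hT] at h1
    have : m ≤ (sSup ((fun k : ℕ => (k : ℕ∞)) '' commonIdx U x y)).toNat := by
      exact_mod_cast h1
    omega

lemma rho_lt_shift {x y : X} {m : ℕ} (h : frinkRho U x y < (2:ℝ) ^ (-(m:ℤ))) :
    frinkRho U x y ≤ (2:ℝ) ^ (-((m:ℤ) + 1)) := by
  rcases rho_cases U x y with h0 | ⟨N, hN⟩
  · rw [h0]; positivity
  · rw [hN] at h ⊢
    have := (zpow_lt_zpow_iff_right₀ (one_lt_two (α := ℝ))).mp h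
    apply zpow_le_zpow_right₀ one_le_two
    omega

lemma rho_pos_ne' (x y : X) (h : frinkRho U x y ≠ 0) :
    ∃ N : ℕ, frinkRho U x y = (2:ℝ) ^ (-(N:ℤ)) := by
  rcases rho_cases U x y with h0 | h1
  · exact absurd h0 h
  · exact h1

section Star
variable (hstar : ∀ n, ∀ u ∈ U (n + 1), ∃ v ∈ U n,
      (⋃₀ {u' ∈ U (n + 1) | (u' ∩ u).Nonempty}) ⊆ v)
include hstar

lemma mem_of_succ_mem {x y : X} {m : ℕ} (h : m + 1 ∈ commonIdx U x y) :
    m ∈ commonIdx U x y := by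
  obtain ⟨u, hu, hx, hy⟩ := h
  obtain ⟨v, hv, hsub⟩ := hstar m u hu
  have humem : u ∈ {u' ∈ U (m + 1) | (u' ∩ u).Nonempty} := ⟨hu, ⟨x, hx, hx⟩⟩
  exact ⟨v, hv, hsub ⟨u, humem, hx⟩, hsub ⟨u, humem, hy⟩⟩

lemma mem_of_le_mem {x y : X} {m k : ℕ} (hmk : m ≤ k) (h : k ∈ commonIdx U x y) :
    m ∈ commonIdx U x y := by
  obtain ⟨j, rfl⟩ := Nat.exists_eq_add_of_le hmk
  clear hmk
  induction j with
  | zero => exact h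
  | succ j ih => exact ih (mem_of_succ_mem U hstar (by rwa [Nat.add_succ] at h))

lemma mem_of_rho_le {x y : X} {m : ℕ}
    (h : frinkRho U x y ≤ (2:ℝ) ^ (-((m:ℤ) + 1))) : m + 1 ∈ commonIdx U x y := by
  classical
  by_cases hT : sSup ((fun k : ℕ => (k : ℕ∞)) '' commonIdx U x y) = ⊤
  · have hex : ∃ k ∈ commonIdx U x y, m + 1 ≤ k := by
      by_contra hc
      push_neg at hc
      have hle : sSup ((fun k : ℕ => (k : ℕ∞)) '' commonIdx U x y) ≤ (m : ℕ∞) := by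
        apply sSup_le
        rintro a ⟨k, hk, rfl⟩
        show (k:ℕ∞) ≤ (m:ℕ∞)
        exact_mod_cast Nat.lt_succ_iff.mp (hc k hk)
      rw [hT] at hle
      exact absurd (top_le_iff.mp hle).symm (by simp)
    obtain ⟨k, hk, hmk⟩ := hex
    exact mem_of_le_mem U hstar hmk hk
  · set S := sSup ((fun k : ℕ => (k : ℕ∞)) '' commonIdx U x y) with hSdef
    have hrho : frinkRho U x y = (2:ℝ) ^ (-(S.toNat : ℤ)) := by
      rw [frinkRho, if_neg hT]
    rw [hrho] at h
    have hm1 : m + 1 ≤ S.toNat := by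
      have := (zpow_le_zpow_iff_right₀ (one_lt_two (α := ℝ))).mp h
      omega
    have hNA : S.toNat ∈ commonIdx U x y := by
      by_contra hna
      have hub : S ≤ ((S.toNat - 1 : ℕ) : ℕ∞) := by
        apply sSup_le
        rintro a ⟨k, hk, rfl⟩
        have hk1 : (k : ℕ∞) ≤ S := le_sSup ⟨k, hk, rfl⟩
        rw [← ENat.coe_toNat hT] at hk1
        have hk2 : k ≤ S.toNat := by exact_mod_cast hk1
        have hk3 : k ≠ S.toNat := fun he => hna (he ▸ hk)
        show (k:ℕ∞) ≤ ((S.toNat - 1 : ℕ) : ℕ∞)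
        exact_mod_cast (by omega : k ≤ S.toNat - 1)
      rw [← ENat.coe_toNat hT] at hub
      have : S.toNat ≤ S.toNat - 1 := by exact_mod_cast hub
      omega
    exact mem_of_le_mem U hstar hm1 hNA

lemma mem3 {a b c d : X} {m : ℕ} (hab : m + 1 ∈ commonIdx U a b)
    (hbc : m + 1 ∈ commonIdx U b c) (hcd : m + 1 ∈ commonIdx U c d) :
    m ∈ commonIdx U a d := by
  obtain ⟨u1, hu1, ha1, hb1⟩ := hab
  obtain ⟨u2, hu2, hb2, hc2⟩ := hbc
  obtain ⟨u3, hu3, hc3, hd3⟩ := hcd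
  obtain ⟨v, hv, hsub⟩ := hstar m u2 hu2
  have h1 : u1 ∈ {u' ∈ U (m + 1) | (u' ∩ u2).Nonempty} := ⟨hu1, ⟨b, hb1, hb2⟩⟩
  have h3 : u3 ∈ {u' ∈ U (m + 1) | (u' ∩ u2).Nonempty} := ⟨hu3, ⟨c, hc3, hc2⟩⟩
  exact ⟨v, hv, hsub ⟨u1, h1, ha1⟩, hsub ⟨u3, h3, hd3⟩⟩

/-- The key "almost triangle" estimate. -/
lemma key3 {a b c d : X} {s : ℝ} (h1 : frinkRho U a b ≤ s)
    (h2 : frinkRho U b c ≤ s) (h3 : frinkRho U c d ≤ s) :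
    frinkRho U a d ≤ 2 * s := by
  by_contra hcon
  push_neg at hcon
  have hs0 : 0 ≤ s := le_trans (rho_nonneg U a b) h1
  have had : 0 < frinkRho U a d := lt_of_le_of_lt (by positivity) hcon
  obtain ⟨N, hN⟩ := rho_pos_ne' U a d (ne_of_gt had)
  rw [hN] at hcon
  have hslt : s < (2:ℝ) ^ (-((N:ℤ) + 1)) := by
    have h2N : (2:ℝ) ^ (-((N:ℤ) + 1)) = (2:ℝ) ^ (-(N:ℤ)) / 2 := by
      rw [show -((N:ℤ) + 1) = -(N:ℤ) + (-1) by ring,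
        zpow_add₀ (by norm_num : (2:ℝ) ≠ 0), zpow_neg_one]
      ring
    rw [h2N]
    linarith
  have hmem : ∀ p q : X, frinkRho U p q ≤ s → N + 1 + 1 ∈ commonIdx U p q := by
    intro p q hpq
    exact mem_of_rho_le U hstar (by
      have : frinkRho U p q < (2:ℝ) ^ (-((N:ℤ) + 1)) := lt_of_le_of_lt hpq hslt
      have := rho_lt_shift U (m := N + 1) (by push_cast; push_cast at this; linarith)
      push_cast at this ⊢
      linarith)
  have hmad : N + 1 ∈ commonIdx U a d :=
    mem3 U hstar (hmem a b h1) (hmem b c h2) (hmem c d h3)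
  have := rho_le_of_mem U hmad
  rw [hN] at this
  have hlt : ((N:ℤ)) < (N:ℤ) + 1 := by omega
  have h2lt : (2:ℝ) ^ (-((N:ℤ) + 1)) < (2:ℝ) ^ (-(N:ℤ)) := by
    apply zpow_lt_zpow_right₀ (one_lt_two (α := ℝ))
    omega
  push_cast at this
  linarith

end Star

lemma rho_self (hcover : ∀ n, ⋃₀ U n = Set.univ) (x : X) : frinkRho U x x = 0 := by
  have hall : ∀ m : ℕ, m ∈ commonIdx U x x := by
    intro m
    have hx : x ∈ ⋃₀ U m := by rw [hcover m]; trivial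
    obtain ⟨u, hu, hxu⟩ := hx
    exact ⟨u, hu, hxu, hxu⟩
  have hT : sSup ((fun k : ℕ => (k : ℕ∞)) '' commonIdx U x x) = ⊤ := by
    by_contra hT
    set S := sSup ((fun k : ℕ => (k : ℕ∞)) '' commonIdx U x x) with hS
    have h1 : ((S.toNat + 1 : ℕ) : ℕ∞) ≤ S := le_sSup ⟨S.toNat + 1, hall _, rfl⟩
    rw [← ENat.coe_toNat hT] at h1
    have : S.toNat + 1 ≤ S.toNat := by exact_mod_cast h1
    omega
  rw [frinkRho, if_pos hT]

section Main
variable (hcover : ∀ n, ⋃₀ U n = Set.univ)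
  (hstar : ∀ n, ∀ u ∈ U (n + 1), ∃ v ∈ U n,
      (⋃₀ {u' ∈ U (n + 1) | (u' ∩ u).Nonempty}) ⊆ v)
include hcover hstar

lemma chain_bound : ∀ n : ℕ, ∀ c : ℕ → X,
    frinkRho U (c 0) (c n) ≤ 2 * ∑ i ∈ Finset.range n, frinkRho U (c i) (c (i + 1)) := by
  intro n
  induction n using Nat.strong_induction_on with
  | _ n IH =>
  intro c
  rcases Nat.eq_zero_or_pos n with rfl | hn
  · simp [rho_self U hcover]
  classical
  set S := ∑ i ∈ Finset.range n, frinkRho U (c i) (c (i + 1)) with hSdef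
  have hterm : ∀ i, 0 ≤ frinkRho U (c i) (c (i + 1)) := fun i => rho_nonneg U _ _
  have hS0 : 0 ≤ S := Finset.sum_nonneg fun i _ => hterm i
  set P : ℕ → Prop := fun j => ∑ i ∈ Finset.range j, frinkRho U (c i) (c (i + 1)) ≤ S / 2
    with hPdef
  set k := Nat.findGreatest P (n - 1) with hkdef
  have hk_le : k ≤ n - 1 := Nat.findGreatest_le _
  have hkP : P k := Nat.findGreatest_spec (Nat.zero_le _) (by simp [hPdef]; linarith)
  have hk_lt_n : k < n := lt_of_le_of_lt hk_le (Nat.sub_lt hn one_pos)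
  have h1 : frinkRho U (c 0) (c k) ≤ S := by
    have := IH k hk_lt_n c
    have hP : ∑ i ∈ Finset.range k, frinkRho U (c i) (c (i + 1)) ≤ S / 2 := hkP
    linarith
  have h2 : frinkRho U (c k) (c (k + 1)) ≤ S := by
    have := Finset.single_le_sum (fun i (_ : i ∈ Finset.range n) => hterm i)
      (Finset.mem_range.2 hk_lt_n)
    linarith
  have h3 : frinkRho U (c (k + 1)) (c n) ≤ S := by
    rcases eq_or_lt_of_le (Nat.succ_le_of_lt hk_lt_n) with heq | hlt
    · rw [show k + 1 = n from heq]
      rw [rho_self U hcover]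
      exact hS0
    · have hk1 : k + 1 ≤ n - 1 := by omega
      have hnot : ¬ P (k + 1) := Nat.findGreatest_is_greatest (by omega) hk1
      have hpart : S / 2 < ∑ i ∈ Finset.range (k + 1), frinkRho U (c i) (c (i + 1)) :=
        not_le.mp hnot
      have hsplit : S = (∑ i ∈ Finset.range (k + 1), frinkRho U (c i) (c (i + 1)))
          + ∑ i ∈ Finset.range (n - (k + 1)),
              frinkRho U (c (k + 1 + i)) (c (k + 1 + i + 1)) := by
        have h := Finset.sum_range_add (f := fun i => frinkRho U (c i) (c (i + 1)))
          (k + 1) (n - (k + 1))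
        rw [show (k + 1) + (n - (k + 1)) = n by omega] at h
        rw [hSdef]
        exact h
      have htail : ∑ i ∈ Finset.range (n - (k + 1)),
          frinkRho U (c (k + 1 + i)) (c (k + 1 + i + 1)) < S / 2 := by linarith
      have hIH := IH (n - (k + 1)) (by omega) (fun i => c (k + 1 + i))
      have he0 : k + 1 + 0 = k + 1 := by omega
      have heN : k + 1 + (n - (k + 1)) = n := by omega
      rw [he0, heN] at hIH
      have hsum_eq : ∑ i ∈ Finset.range (n - (k + 1)),
            frinkRho U (c (k + 1 + i)) (c (k + 1 + (i + 1)))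
          = ∑ i ∈ Finset.range (n - (k + 1)),
            frinkRho U (c (k + 1 + i)) (c (k + 1 + i + 1)) := by
        apply Finset.sum_congr rfl
        intro i _
        rw [show k + 1 + (i + 1) = k + 1 + i + 1 by omega]
      rw [hsum_eq] at hIH
      linarith
  exact key3 U hstar h1 h2 h3

end Main

def chainSet (x y : X) : Set ℝ :=
  {s : ℝ | ∃ (n : ℕ) (c : ℕ → X), c 0 = x ∧ c n = y ∧
    s = ∑ i ∈ Finset.range n, frinkRho U (c i) (c (i + 1))}

lemma frinkD_eq (x y : X) : frinkD U x y = sInf (chainSet U x y) := rfl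

lemma rho_mem_chainSet (x y : X) : frinkRho U x y ∈ chainSet U x y := by
  refine ⟨1, fun i => if i = 0 then x else y, by simp, by simp, ?_⟩
  simp [Finset.sum_range_one]

lemma chainSet_nonneg {x y : X} {s : ℝ} (hs : s ∈ chainSet U x y) : 0 ≤ s := by
  obtain ⟨n, c, _, _, rfl⟩ := hs
  exact Finset.sum_nonneg fun i _ => rho_nonneg U _ _

lemma chainSet_bdd (x y : X) : BddBelow (chainSet U x y) :=
  ⟨0, fun s hs => chainSet_nonneg U hs⟩

lemma chainSet_ne (x y : X) : (chainSet U x y).Nonempty :=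
  ⟨_, rho_mem_chainSet U x y⟩

lemma chainSet_symm_subset (x y : X) : chainSet U x y ⊆ chainSet U y x := by
  rintro s ⟨n, c, h0, hn, rfl⟩
  refine ⟨n, fun i => c (n - i), by simp [hn], by simp [h0], ?_⟩
  simp only
  have hrefl := Finset.sum_range_reflect (fun j => frinkRho U (c j) (c (j + 1))) n
  rw [← hrefl]
  apply Finset.sum_congr rfl
  intro i hi
  have hi' : i < n := Finset.mem_range.mp hi
  rw [rho_symm U]
  rw [show n - (i + 1) = n - 1 - i by omega, show n - i = n - 1 - i + 1 by omega]

lemma add_mem_chainSet {x y z : X} {s1 s2 : ℝ} (h1 : s1 ∈ chainSet U x y)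
    (h2 : s2 ∈ chainSet U y z) : s1 + s2 ∈ chainSet U x z := by
  classical
  obtain ⟨n, c, hc0, hcn, rfl⟩ := h1
  obtain ⟨m, c', hc'0, hc'm, rfl⟩ := h2
  refine ⟨n + m, fun i => if i < n then c i else c' (i - n), ?_, ?_, ?_⟩
  · by_cases h : 0 < n
    · simp [h, hc0]
    · have hn0 : n = 0 := by omega
      simp only [h, if_false]
      rw [hn0] at hcn
      simp [hn0, hc'0, ← hcn, hc0]
  · have hnm : ¬ (n + m < n) := by omega
    simp only [hnm, if_false]
    rw [show n + m - n = m by omega, hc'm]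
  · simp only
    rw [Finset.sum_range_add]
    congr 1
    · apply Finset.sum_congr rfl
      intro i hi
      have hi' : i < n := Finset.mem_range.mp hi
      rw [if_pos hi']
      by_cases h2' : i + 1 < n
      · rw [if_pos h2']
      · have hi1 : i + 1 = n := by omega
        rw [if_neg h2', hi1, Nat.sub_self, hc'0, ← hcn]
    · apply Finset.sum_congr rfl
      intro i _
      have e1 : ¬ (n + i < n) := by omega
      have e2 : ¬ (n + i + 1 < n) := by omega
      rw [if_neg e1, if_neg e2, show n + i + 1 - n = i + 1 by omega,
        show n + i - n = i by omega]

end Aux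

/-- Frink's lemma: given a sequence of covers, each star-refining the previous one,
the chain metric `d` built from `ρ` is a pseudometric satisfying `ρ/2 ≤ d ≤ ρ`. -/
theorem stmt3 {X : Type*} (U : ℕ → Set (Set X))
    (hcover : ∀ n, ⋃₀ U n = Set.univ)
    (hstar : ∀ n, ∀ u ∈ U (n + 1), ∃ v ∈ U n,
      (⋃₀ {u' ∈ U (n + 1) | (u' ∩ u).Nonempty}) ⊆ v) :
    (∀ x, frinkD U x x = 0) ∧
    (∀ x y, 0 ≤ frinkD U x y) ∧
    (∀ x y, frinkD U x y = frinkD U y x) ∧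
    (∀ x y z, frinkD U x z ≤ frinkD U x y + frinkD U y z) ∧
    (∀ x y, frinkRho U x y / 2 ≤ frinkD U x y ∧ frinkD U x y ≤ frinkRho U x y) := by
  have hdle : ∀ x y, frinkD U x y ≤ frinkRho U x y := fun x y => by
    rw [frinkD_eq]
    exact csInf_le (chainSet_bdd U x y) (rho_mem_chainSet U x y)
  have hd0 : ∀ x y, 0 ≤ frinkD U x y := fun x y => by
    rw [frinkD_eq]
    exact le_csInf (chainSet_ne U x y) fun s hs => chainSet_nonneg U hs
  refine ⟨?_, hd0, ?_, ?_, ?_⟩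
  · intro x
    exact le_antisymm (le_trans (hdle x x) (le_of_eq (rho_self U hcover x))) (hd0 x x)
  · intro x y
    rw [frinkD_eq, frinkD_eq]
    rw [Set.Subset.antisymm (chainSet_symm_subset U x y) (chainSet_symm_subset U y x)]
  · intro x y z
    have key : ∀ s1 ∈ chainSet U x y, ∀ s2 ∈ chainSet U y z, frinkD U x z ≤ s1 + s2 := by
      intro s1 h1 s2 h2
      rw [frinkD_eq]
      exact csInf_le (chainSet_bdd U x z) (add_mem_chainSet U h1 h2)
    have h2 : ∀ s1 ∈ chainSet U x y, frinkD U x z - s1 ≤ frinkD U y z := by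
      intro s1 h1
      rw [frinkD_eq U y z]
      apply le_csInf (chainSet_ne U y z)
      intro s2 hs2
      linarith [key s1 h1 s2 hs2]
    have h3 : frinkD U x z - frinkD U y z ≤ frinkD U x y := by
      rw [frinkD_eq U x y]
      apply le_csInf (chainSet_ne U x y)
      intro s1 hs1
      linarith [h2 s1 hs1]
    linarith
  · intro x y
    constructor
    · rw [frinkD_eq]
      apply le_csInf (chainSet_ne U x y)
      rintro s ⟨n, c, h0c, hnc, rfl⟩
      have := chain_bound U hcover hstar n c
      rw [h0c, hnc] at this
      linarith
    · exact hdle x y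
end

section
/- Let A be a unital C*-algebra and {π_x : A → B(H_x)}_{x ∈ X} a family of unital *-representations on Hilbert spaces that is jointly isometric, i.e., ‖a‖ = sup_{x ∈ X} ‖π_x(a)‖ for every a ∈ A. Then a ∈ A is invertible in A if and only if π_x(a) is invertible for every x ∈ X and sup_{x ∈ X} ‖π_x(a)⁻¹‖ < ∞. -/
/-!
Invertibility of `a` reduces to that of the positive elements `a⋆a` and `aa⋆`. If
`‖π_x(a)⁻¹‖ ≤ C` for all `x`, then `π_x(a⋆a) ≥ C⁻²` in every `B(H_x)`, and joint isometry
transfers this lower bound back to `A`: a self-adjoint `s` all of whose images are positive is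
positive, since `t = ‖s‖ - s` satisfies `0 ≤ π_x t ≤ ‖s‖` for every `x`, hence `‖t‖ ≤ ‖s‖`,
i.e. `t ≤ ‖s‖`. So `a⋆a ≥ C⁻²` is strictly positive, hence invertible.
-/

open Ring

lemma isUnit_of_isUnit_mul_of_isUnit_mul {M : Type*} [Monoid M] {a b c : M}
    (hleft : IsUnit (b * a)) (hright : IsUnit (a * c)) : IsUnit a :=
  isUnit_iff_exists_and_exists.mpr
    ⟨⟨c * ↑hright.unit⁻¹, by rw [← mul_assoc, hright.mul_val_inv]⟩,
      ⟨↑hleft.unit⁻¹ * b, by rw [mul_assoc, hleft.val_inv_mul]⟩⟩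

lemma map_ringInverse_of_isUnit {F M N : Type*} [MonoidWithZero M] [MonoidWithZero N]
    [FunLike F M N] [MonoidHomClass F M N] (f : F) {a : M} (ha : IsUnit a) :
    f a⁻¹ʳ = (f a)⁻¹ʳ := by
  obtain ⟨u, rfl⟩ := ha
  simpa using (inverse_unit (Units.map (f : M →* N) u)).symm

lemma map_algebraMap_of_tower {R S A B F : Type*} [CommSemiring R] [CommSemiring S]
    [Semiring A] [Semiring B] [Algebra R S] [Algebra S A] [Algebra S B] [Algebra R A]
    [Algebra R B] [IsScalarTower R S A] [IsScalarTower R S B] [FunLike F A B]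
    [AlgHomClass F S A B] (f : F) (r : R) : f (algebraMap R A r) = algebraMap R B r := by
  rw [IsScalarTower.algebraMap_apply R S A, AlgHomClass.commutes,
    ← IsScalarTower.algebraMap_apply R S B]

namespace CStarAlgebra

variable {B : Type*} [CStarAlgebra B] [PartialOrder B] [StarOrderedRing B]

lemma algebraMap_inv_le_of_norm_ringInverse_le {b : B} (hb : IsStrictlyPositive b) {K : ℝ}
    (hK : 0 < K) (h : ‖b⁻¹ʳ‖ ≤ K) : algebraMap ℝ B K⁻¹ ≤ b := by
  have hKu : IsUnit (algebraMap ℝ B K) := (IsUnit.mk0 K hK.ne').map _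
  have hKinv : (algebraMap ℝ B K)⁻¹ʳ = algebraMap ℝ B K⁻¹ := by
    rw [← mul_one (algebraMap ℝ B K)⁻¹ʳ, inverse_mul_eq_iff_eq_mul _ _ _ hKu, ← map_mul,
      mul_inv_cancel₀ hK.ne', map_one]
  have hle : b⁻¹ʳ ≤ algebraMap ℝ B K :=
    (norm_le_iff_le_algebraMap _ hK.le hb.ringInverse.nonneg).mp h
  simpa [inverse_inverse hb.isUnit, hKinv] using
    ringInverse_le_ringInverse hle (ha := hb.ringInverse)

lemma algebraMap_le_star_mul_self_of_norm_ringInverse_le {b : B} (hb : IsUnit b) {C : ℝ}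
    (hC : 0 < C) (h : ‖b⁻¹ʳ‖ ≤ C) : algebraMap ℝ B (C ^ 2)⁻¹ ≤ star b * b := by
  refine algebraMap_inv_le_of_norm_ringInverse_le
    (isStrictlyPositive_iff_eq_star_mul_self.mpr ⟨b, hb, rfl⟩) (by positivity) ?_
  rw [inverse_mul (.inr hb), inverse_star, CStarRing.norm_self_mul_star, sq]
  gcongr

end CStarAlgebra

section JointlyIsometric

variable {A : Type*} [CStarAlgebra A] [PartialOrder A] [StarOrderedRing A]
  {X : Type*} {B : X → Type*} [∀ x, CStarAlgebra (B x)] [∀ x, PartialOrder (B x)]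
  [∀ x, StarOrderedRing (B x)]

lemma nonneg_of_forall_map_nonneg (π : ∀ x, A →⋆ₐ[ℂ] B x) (hiso : ∀ a, ‖a‖ ≤ ⨆ x, ‖π x a‖)
    {s : A} (hs : IsSelfAdjoint s) (h : ∀ x, 0 ≤ π x s) : 0 ≤ s := by
  set r := ‖s‖
  have hmem : ∀ x, π x (algebraMap ℝ A r - s) ∈ Set.Icc 0 (algebraMap ℝ (B x) r) := by
    intro x
    rw [map_sub, map_algebraMap_of_tower, Set.sub_mem_Icc_zero_iff_right,
      CStarAlgebra.mem_Icc_algebraMap_iff_norm_le (norm_nonneg s)]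
    exact ⟨h x, NonUnitalStarAlgHom.norm_apply_le (π x) s⟩
  have hnorm : ‖algebraMap ℝ A r - s‖ ≤ r :=
    (hiso _).trans <| Real.iSup_le (fun x ↦
      ((CStarAlgebra.mem_Icc_algebraMap_iff_norm_le (norm_nonneg s)).mp (hmem x)).2) (norm_nonneg s)
  have : algebraMap ℝ A r - s ∈ Set.Icc 0 (algebraMap ℝ A r) :=
    (CStarAlgebra.mem_Icc_algebraMap_iff_norm_le (norm_nonneg s)).mpr
      ⟨sub_nonneg.mpr hs.le_algebraMap_norm_self, hnorm⟩
  exact (Set.sub_mem_Icc_zero_iff_right.mp this).1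

lemma isUnit_star_mul_self_of_forall_isUnit_map (π : ∀ x, A →⋆ₐ[ℂ] B x)
    (hiso : ∀ a, ‖a‖ ≤ ⨆ x, ‖π x a‖) {a : A} (hunit : ∀ x, IsUnit (π x a)) {C : ℝ} (hC : 0 < C)
    (hbound : ∀ x, ‖(π x a)⁻¹ʳ‖ ≤ C) : IsUnit (star a * a) := by
  set ε : ℝ := (C ^ 2)⁻¹
  have hε : 0 < ε := by positivity
  have hle : algebraMap ℝ A ε ≤ star a * a := by
    refine sub_nonneg.mp <| nonneg_of_forall_map_nonneg π hiso
      ((IsSelfAdjoint.star_mul_self a).sub (.algebraMap A (.all ε))) fun x ↦ ?_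
    rw [map_sub, map_mul, map_star, map_algebraMap_of_tower, sub_nonneg]
    exact CStarAlgebra.algebraMap_le_star_mul_self_of_norm_ringInverse_le (hunit x) hC (hbound x)
  exact CStarAlgebra.isUnit_of_le _ hle (isStrictlyPositive_algebraMap hε)

lemma isUnit_of_forall_isUnit_map (π : ∀ x, A →⋆ₐ[ℂ] B x) (hiso : ∀ a, ‖a‖ ≤ ⨆ x, ‖π x a‖)
    {a : A} (hunit : ∀ x, IsUnit (π x a)) {C : ℝ} (hbound : ∀ x, ‖(π x a)⁻¹ʳ‖ ≤ C) :
    IsUnit a := by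
  have hbound' : ∀ x, ‖(π x a)⁻¹ʳ‖ ≤ max C 1 := fun x ↦ (hbound x).trans (le_max_left C 1)
  have hC : 0 < max C 1 := lt_max_of_lt_right one_pos
  have hstar : ∀ x, π x (star a) = star (π x a) := fun x ↦ map_star (π x) a
  refine isUnit_of_isUnit_mul_of_isUnit_mul
    (isUnit_star_mul_self_of_forall_isUnit_map π hiso hunit hC hbound')
    (c := star a) ?_
  simpa using isUnit_star_mul_self_of_forall_isUnit_map π hiso (a := star a)
    (fun x ↦ hstar x ▸ (hunit x).star) hC
    (fun x ↦ by rw [hstar, inverse_star, norm_star]; exact hbound' x)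

theorem isUnit_iff_forall_isUnit_map (π : ∀ x, A →⋆ₐ[ℂ] B x) (hiso : ∀ a, ‖a‖ ≤ ⨆ x, ‖π x a‖)
    (a : A) : IsUnit a ↔ (∀ x, IsUnit (π x a)) ∧ ∃ C : ℝ, ∀ x, ‖(π x a)⁻¹ʳ‖ ≤ C := by
  refine ⟨fun ha ↦ ⟨fun x ↦ ha.map (π x), ‖a⁻¹ʳ‖, fun x ↦ ?_⟩,
    fun ⟨hunit, C, hbound⟩ ↦ isUnit_of_forall_isUnit_map π hiso hunit hbound⟩
  rw [← map_ringInverse_of_isUnit (π x) ha]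
  exact NonUnitalStarAlgHom.norm_apply_le (π x) _

end JointlyIsometric

/-- For a jointly isometric family of unital *-representations `π_x` of a unital
C*-algebra `A` on Hilbert spaces `H x`, an element `a` is invertible in `A` if and
only if every `π_x a` is invertible with uniformly bounded inverses. -/
theorem stmt6 {A : Type*} [NormedRing A] [StarRing A] [CStarRing A] [CompleteSpace A]
    [NormedAlgebra ℂ A] [StarModule ℂ A]
    {X : Type*} (H : X → Type*)
    [∀ x, NormedAddCommGroup (H x)] [∀ x, InnerProductSpace ℂ (H x)]
    [∀ x, CompleteSpace (H x)]
    (π : ∀ x, A →⋆ₐ[ℂ] (H x →L[ℂ] H x))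
    (hiso : ∀ a : A, ‖a‖ = ⨆ x, ‖π x a‖) (a : A) :
    IsUnit a ↔ ((∀ x, IsUnit (π x a)) ∧ ∃ C : ℝ, ∀ x, ‖Ring.inverse (π x a)‖ ≤ C) := by
  let : CStarAlgebra A := { ‹NormedRing A›, ‹StarRing A›, ‹CStarRing A›, ‹CompleteSpace A›,
    ‹NormedAlgebra ℂ A›, ‹StarModule ℂ A› with }
  let : PartialOrder A := CStarAlgebra.spectralOrder A
  let : StarOrderedRing A := CStarAlgebra.spectralOrderedRing A
  exact isUnit_iff_forall_isUnit_map π (fun b ↦ (hiso b).le) a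
end
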